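/- arXiv:2111.15528 — 8 statements merged into one kernel-verified Lean document; each statement's English description precedes it below -/
import Mathlib

section
/- The maximum cardinality of a total matching in the complete bipartite graph K_{r,r} equals r. -/
/-- A total matching of `G`, given by its vertex part `S` and edge part `M`:
all elements pairwise non-adjacent. -/
def IsTotalMatching {V : Type*} (G : SimpleGraph V) (S : Finset V) (M : Finset (Sym2 V)) : Prop :=
  (∀ e ∈ M, e ∈ G.edgeSet) ∧
  (∀ u ∈ S, ∀ v ∈ S, ¬ G.Adj u v) ∧
  (∀ e ∈ M, ∀ f ∈ M, e ≠ f → ∀ v : V, ¬ (v ∈ e ∧ v ∈ f)) ∧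
  (∀ v ∈ S, ∀ e ∈ M, v ∉ e)

/-- The total matching number ν_T(G). -/
noncomputable def totalMatchingNumber {V : Type*} (G : SimpleGraph V) : ℕ :=
  sSup {n | ∃ S M, IsTotalMatching G S M ∧ S.card + M.card = n}

namespace TMaux

variable {r : ℕ}

def g (h0 : Fin r) : (Fin r ⊕ Fin r) → (Fin r ⊕ Fin r) → Fin r
  | Sum.inl a, Sum.inl b => min a b
  | Sum.inl a, Sum.inr _ => a
  | Sum.inr _, Sum.inl b => b
  | Sum.inr _, Sum.inr _ => h0

lemma g_symm (h0 : Fin r) : ∀ x y, g h0 x y = g h0 y x := by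
  intro x y; cases x <;> cases y <;> simp [g, min_comm]

def leftEnd (h0 : Fin r) : Sym2 (Fin r ⊕ Fin r) → Fin r :=
  Sym2.lift ⟨g h0, g_symm h0⟩

lemma leftEnd_mem (h0 : Fin r) {e : Sym2 (Fin r ⊕ Fin r)}
    (he : e ∈ (completeBipartiteGraph (Fin r) (Fin r)).edgeSet) :
    Sum.inl (leftEnd h0 e) ∈ e := by
  induction e using Sym2.ind with
  | _ x y =>
    rw [SimpleGraph.mem_edgeSet] at he
    cases x <;> cases y <;> simp_all [leftEnd, g]

lemma bound_left (h0 : Fin r) (S : Finset (Fin r ⊕ Fin r)) (M : Finset (Sym2 (Fin r ⊕ Fin r)))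
    (hTM : IsTotalMatching (completeBipartiteGraph (Fin r) (Fin r)) S M)
    (hS : ∀ v ∈ S, ∃ a, v = Sum.inl a) : S.card + M.card ≤ r := by
  classical
  obtain ⟨hM, hSS, hMM, hSM⟩ := hTM
  set f : (Fin r ⊕ Fin r) → Fin r := Sum.elim id (fun _ => h0) with hf
  have h1 : (S.image f).card = S.card := by
    apply Finset.card_image_of_injOn
    intro u hu v hv huv
    obtain ⟨a, rfl⟩ := hS u hu
    obtain ⟨b, rfl⟩ := hS v hv
    simpa [hf] using huv
  have h2 : (M.image (leftEnd h0)).card = M.card := by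
    apply Finset.card_image_of_injOn
    intro e he e' he' hee
    by_contra hne
    exact hMM e he e' he' hne (Sum.inl (leftEnd h0 e))
      ⟨leftEnd_mem h0 (hM e he), hee ▸ leftEnd_mem h0 (hM e' he')⟩
  have hdisj : Disjoint (S.image f) (M.image (leftEnd h0)) := by
    rw [Finset.disjoint_left]
    rintro a ha ha'
    obtain ⟨v, hv, rfl⟩ := Finset.mem_image.mp ha
    obtain ⟨e, he, hfe⟩ := Finset.mem_image.mp ha'
    obtain ⟨b, rfl⟩ := hS v hv
    have : Sum.inl (f (Sum.inl b)) ∈ e := hfe ▸ leftEnd_mem h0 (hM e he)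
    simp only [hf, Sum.elim_inl, id] at this
    exact hSM _ hv e he this
  calc S.card + M.card = (S.image f ∪ M.image (leftEnd h0)).card := by
        rw [Finset.card_union_of_disjoint hdisj, h1, h2]
    _ ≤ (Finset.univ : Finset (Fin r)).card := Finset.card_le_card (Finset.subset_univ _)
    _ = r := Finset.card_univ.trans (Fintype.card_fin r)

lemma bound (h0 : Fin r) (S : Finset (Fin r ⊕ Fin r)) (M : Finset (Sym2 (Fin r ⊕ Fin r)))
    (hTM : IsTotalMatching (completeBipartiteGraph (Fin r) (Fin r)) S M) :
    S.card + M.card ≤ r := by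
  classical
  obtain ⟨hM, hSS, hMM, hSM⟩ := hTM
  by_cases hL : ∀ v ∈ S, ∃ a, v = Sum.inl a
  · exact bound_left h0 S M ⟨hM, hSS, hMM, hSM⟩ hL
  · -- some vertex of S is inr; then all are inr
    push_neg at hL
    obtain ⟨v0, hv0, hv0r⟩ := hL
    obtain ⟨b0, rfl⟩ : ∃ b, v0 = Sum.inr b := by
      cases v0 with
      | inl a => exact absurd rfl (hv0r a)
      | inr b => exact ⟨b, rfl⟩
    have hR : ∀ v ∈ S, ∃ b, v = Sum.inr b := by
      intro v hv
      cases v with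
      | inl a => exact absurd (by simp) (hSS _ hv _ hv0)
      | inr b => exact ⟨b, rfl⟩
    -- swap sides
    set S' := S.image Sum.swap with hS'
    set M' := M.image (Sym2.map Sum.swap) with hM'
    have hswap_inj : Function.Injective (Sum.swap : Fin r ⊕ Fin r → Fin r ⊕ Fin r) :=
      fun a b h => by rw [← Sum.swap_swap a, h, Sum.swap_swap]
    have hadj : ∀ u v : Fin r ⊕ Fin r,
        (completeBipartiteGraph (Fin r) (Fin r)).Adj (Sum.swap u) (Sum.swap v) ↔
        (completeBipartiteGraph (Fin r) (Fin r)).Adj u v := by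
      intro u v; cases u <;> cases v <;> simp [Sum.swap]
    have hcS : S'.card = S.card := Finset.card_image_of_injective _ hswap_inj
    have hcM : M'.card = M.card :=
      Finset.card_image_of_injective _ (Sym2.map.injective hswap_inj)
    have hmem_swap : ∀ (v : Fin r ⊕ Fin r) (e : Sym2 (Fin r ⊕ Fin r)),
        v ∈ Sym2.map Sum.swap e ↔ Sum.swap v ∈ e := by
      intro v e
      induction e using Sym2.ind with
      | _ x y =>
        simp only [Sym2.map_pair_eq, Sym2.mem_iff]
        constructor
        · rintro (rfl | rfl) <;> simp [Sum.swap_swap]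
        · rintro (h | h) <;> [left; right] <;>
            simpa [Sum.swap_swap] using congrArg Sum.swap h
    have hTM' : IsTotalMatching (completeBipartiteGraph (Fin r) (Fin r)) S' M' := by
      refine ⟨?_, ?_, ?_, ?_⟩
      · rintro e he
        obtain ⟨e', he', rfl⟩ := Finset.mem_image.mp he
        have := hM e' he'
        induction e' using Sym2.ind with
        | _ x y =>
          rw [Sym2.map_pair_eq, SimpleGraph.mem_edgeSet]
          exact (hadj x y).mpr this
      · rintro u hu v hv
        obtain ⟨u', hu', rfl⟩ := Finset.mem_image.mp hu
        obtain ⟨v', hv', rfl⟩ := Finset.mem_image.mp hv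
        rw [hadj]
        exact hSS _ hu' _ hv'
      · rintro e he f hf hef v ⟨hve, hvf⟩
        obtain ⟨e', he', rfl⟩ := Finset.mem_image.mp he
        obtain ⟨f', hf', rfl⟩ := Finset.mem_image.mp hf
        have hne : e' ≠ f' := fun h => hef (by rw [h])
        exact hMM e' he' f' hf' hne (Sum.swap v)
          ⟨(hmem_swap v e').mp hve, (hmem_swap v f').mp hvf⟩
      · rintro v hv e he hve
        obtain ⟨v', hv', rfl⟩ := Finset.mem_image.mp hv
        obtain ⟨e', he', rfl⟩ := Finset.mem_image.mp he
        rw [hmem_swap, Sum.swap_swap] at hve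
        exact hSM _ hv' _ he' hve
    have hL' : ∀ v ∈ S', ∃ a, v = Sum.inl a := by
      intro v hv
      obtain ⟨v', hv', rfl⟩ := Finset.mem_image.mp hv
      obtain ⟨b, rfl⟩ := hR v' hv'
      exact ⟨b, rfl⟩
    have := bound_left h0 S' M' hTM' hL'
    rwa [hcS, hcM] at this

lemma achieve (r : ℕ) :
    ∃ S M, IsTotalMatching (completeBipartiteGraph (Fin r) (Fin r)) S M ∧
      S.card + M.card = r := by
  classical
  refine ⟨∅, Finset.univ.image (fun i : Fin r => s(Sum.inl i, Sum.inr i)), ?_, ?_⟩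
  · refine ⟨?_, by simp, ?_, by simp⟩
    · intro e he
      obtain ⟨i, _, rfl⟩ := Finset.mem_image.mp he
      simp
    · rintro e he f hf hef v ⟨hve, hvf⟩
      obtain ⟨i, _, rfl⟩ := Finset.mem_image.mp he
      obtain ⟨j, _, rfl⟩ := Finset.mem_image.mp hf
      simp only [Sym2.mem_iff] at hve hvf
      apply hef
      rcases hve with rfl | rfl <;> rcases hvf with h | h <;> simp_all
  · rw [Finset.card_empty, Nat.zero_add]
    rw [Finset.card_image_of_injective]
    · simp
    · intro i j hij
      simp only at hij
      have : Sum.inl i ∈ s(Sum.inl j, (Sum.inr j : Fin r ⊕ Fin r)) := by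
        rw [← hij]; simp
      simpa using this

end TMaux

/-- ν_T(K_{r,r}) = r. -/
theorem totalMatchingNumber_completeBipartite_balanced (r : ℕ) (hr : 1 ≤ r) :
    totalMatchingNumber (completeBipartiteGraph (Fin r) (Fin r)) = r := by
  have h0 : Fin r := ⟨0, hr⟩
  obtain ⟨S₀, M₀, hTM₀, hc₀⟩ := TMaux.achieve r
  have hmem : r ∈ {n | ∃ S M, IsTotalMatching (completeBipartiteGraph (Fin r) (Fin r)) S M ∧
      S.card + M.card = n} := ⟨S₀, M₀, hTM₀, hc₀⟩
  have hub : ∀ n ∈ {n | ∃ S M, IsTotalMatching (completeBipartiteGraph (Fin r) (Fin r)) S M ∧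
      S.card + M.card = n}, n ≤ r := by
    rintro n ⟨S, M, hTM, rfl⟩
    exact TMaux.bound h0 S M hTM
  apply le_antisymm
  · exact csSup_le ⟨r, hmem⟩ hub
  · exact le_csSup ⟨r, hub⟩ hmem
end

section
/- The maximum cardinality of a total matching in the complete bipartite graph K_{r,s} with s > r equals s. -/
/-- ν_T(K_{r,s}) = s when s > r ≥ 1. -/
theorem totalMatchingNumber_completeBipartite (r s : ℕ) (hr : 1 ≤ r) (hrs : r < s) :
    totalMatchingNumber (completeBipartiteGraph (Fin r) (Fin s)) = s := by
  classical
  have hs0 : 0 < s := lt_of_le_of_lt (Nat.zero_le r) hrs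
  set G := completeBipartiteGraph (Fin r) (Fin s) with hG
  set A := {n | ∃ S M, IsTotalMatching G S M ∧ S.card + M.card = n} with hA
  -- Upper bound: every total matching has size ≤ s
  have hub : ∀ n ∈ A, n ≤ s := by
    rintro n ⟨S, M, ⟨hM, hS, hMM, hSM⟩, rfl⟩
    -- generic counting lemma
    have main : ∀ (g : Sym2 (Fin r ⊕ Fin s) → (Fin r ⊕ Fin s)) (k : ℕ)
        (f : Fin k ↪ (Fin r ⊕ Fin s)),
        (∀ e ∈ M, g e ∈ e) → (∀ v ∈ S ∪ M.image g, v ∈ Finset.univ.map f) →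
        S.card + M.card ≤ k := by
      intro g k f hg hsub
      have hdisj : Disjoint S (M.image g) := by
        rw [Finset.disjoint_left]
        intro v hvS hvI
        obtain ⟨e, heM, rfl⟩ := Finset.mem_image.mp hvI
        exact hSM _ hvS e heM (hg e heM)
      have hinj : Set.InjOn g M := by
        intro e he f hf hef
        by_contra hne
        exact hMM e he f hf hne (g e) ⟨hg e he, hef ▸ hg f hf⟩
      have hcard : (S ∪ M.image g).card = S.card + M.card := by
        rw [Finset.card_union_of_disjoint hdisj, Finset.card_image_of_injOn hinj]
      calc S.card + M.card = (S ∪ M.image g).card := hcard.symm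
        _ ≤ (Finset.univ.map f).card := Finset.card_le_card fun v hv => hsub v hv
        _ = k := by simp
    by_cases hcase : ∀ v ∈ S, v.isRight
    · -- S on the right side: count right endpoints
      set g : Sym2 (Fin r ⊕ Fin s) → (Fin r ⊕ Fin s) := fun e =>
        if h : ∃ v, v ∈ e ∧ v.isRight then h.choose else Sum.inr ⟨0, hs0⟩ with hgdef
      have hg : ∀ e ∈ M, g e ∈ e ∧ (g e).isRight := by
        intro e he
        have hex : ∃ v, v ∈ e ∧ v.isRight := by
          have hedge := hM e he
          induction e using Sym2.ind with
          | _ u v =>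
            rw [SimpleGraph.mem_edgeSet] at hedge
            rcases hedge with ⟨_, hv⟩ | ⟨hu, _⟩
            · exact ⟨v, by simp, hv⟩
            · exact ⟨u, by simp, hu⟩
        rw [hgdef]; simp only [dif_pos hex]
        exact hex.choose_spec
      refine main g s ⟨Sum.inr, Sum.inr_injective⟩ (fun e he => (hg e he).1) ?_
      intro v hv
      have hvr : v.isRight := by
        rcases Finset.mem_union.mp hv with h | h
        · exact hcase v h
        · obtain ⟨e, heM, rfl⟩ := Finset.mem_image.mp h
          exact (hg e heM).2
      obtain ⟨b, rfl⟩ := Sum.isRight_iff.mp hvr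
      simp
    · -- S has an element on the left, hence is entirely on the left
      push_neg at hcase
      obtain ⟨v0, hv0S, hv0⟩ := hcase
      have hv0l : v0.isLeft := by
        cases v0 with
        | inl a => simp
        | inr b => simp at hv0
      have hSleft : ∀ v ∈ S, v.isLeft := by
        intro v hv
        by_contra hvl
        have hvr : v.isRight := Sum.not_isLeft.mp hvl
        exact hS v0 hv0S v hv (Or.inl ⟨hv0l, hvr⟩)
      set g : Sym2 (Fin r ⊕ Fin s) → (Fin r ⊕ Fin s) := fun e =>
        if h : ∃ v, v ∈ e ∧ v.isLeft then h.choose else Sum.inl ⟨0, hr⟩ with hgdef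
      have hg : ∀ e ∈ M, g e ∈ e ∧ (g e).isLeft := by
        intro e he
        have hex : ∃ v, v ∈ e ∧ v.isLeft := by
          have hedge := hM e he
          induction e using Sym2.ind with
          | _ u v =>
            rw [SimpleGraph.mem_edgeSet] at hedge
            rcases hedge with ⟨hu, _⟩ | ⟨_, hv⟩
            · exact ⟨u, by simp, hu⟩
            · exact ⟨v, by simp, hv⟩
        rw [hgdef]; simp only [dif_pos hex]
        exact hex.choose_spec
      have hle : S.card + M.card ≤ r := by
        refine main g r ⟨Sum.inl, Sum.inl_injective⟩ (fun e he => (hg e he).1) ?_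
        intro v hv
        have hvl : v.isLeft := by
          rcases Finset.mem_union.mp hv with h | h
          · exact hSleft v h
          · obtain ⟨e, heM, rfl⟩ := Finset.mem_image.mp h
            exact (hg e heM).2
        obtain ⟨a, rfl⟩ := Sum.isLeft_iff.mp hvl
        simp
      exact le_of_lt (lt_of_le_of_lt hle hrs)
  -- Lower bound: take all right vertices, no edges
  have hmem : s ∈ A := by
    refine ⟨Finset.univ.map ⟨Sum.inr, Sum.inr_injective⟩, ∅, ⟨?_, ?_, ?_, ?_⟩, by simp⟩
    · simp
    · intro u hu v hv hadj
      simp only [Finset.mem_map, Finset.mem_univ, true_and] at hu hv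
      obtain ⟨a, rfl⟩ := hu
      obtain ⟨b, rfl⟩ := hv
      simp [hG] at hadj
    · simp
    · simp
  have hbdd : BddAbove A := ⟨s, fun n hn => hub n hn⟩
  exact le_antisymm (csSup_le ⟨s, hmem⟩ hub) (le_csSup hbdd hmem)
end

section
/- Let G be a finite simple graph containing an induced balanced biclique K_{r,r}. Then every total matching T of G satisfies |T ∩ (V(K_{r,r}) ∪ E(K_{r,r}))| ≤ r; i.e., the balanced biclique inequality Σ_{v ∈ V(K_{r,r})} x_v + Σ_{e ∈ E(K_{r,r})} y_e ≤ r is valid for the characteristic vector of every total matching. -/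
lemma aux_count {V : Type*} [DecidableEq V] (A S : Finset V) (M' : Finset (Sym2 V))
    (hend : ∀ e ∈ M', ∃ a ∈ A, a ∈ e)
    (hdisj : ∀ e ∈ M', ∀ f ∈ M', e ≠ f → ∀ v : V, ¬ (v ∈ e ∧ v ∈ f))
    (hSM : ∀ v ∈ S, ∀ e ∈ M', v ∉ e) :
    (S ∩ A).card + M'.card ≤ A.card := by
  classical
  have hpd : ∀ e ∈ M', ∀ f ∈ M', e ≠ f →
      Disjoint (A.filter (fun v => v ∈ e)) (A.filter (fun v => v ∈ f)) := by
    intro e he f hf hef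
    rw [Finset.disjoint_left]
    intro v hv hv'
    simp only [Finset.mem_filter] at hv hv'
    exact hdisj e he f hf hef v ⟨hv.2, hv'.2⟩
  have hcardB : M'.card ≤ (M'.biUnion (fun e => A.filter (fun v => v ∈ e))).card := by
    rw [Finset.card_biUnion hpd]
    calc M'.card = ∑ _e ∈ M', 1 := by simp
    _ ≤ ∑ e ∈ M', (A.filter (fun v => v ∈ e)).card := by
        apply Finset.sum_le_sum
        intro e he
        obtain ⟨a, ha, hae⟩ := hend e he
        exact Finset.card_pos.mpr ⟨a, Finset.mem_filter.mpr ⟨ha, hae⟩⟩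
  have hd : Disjoint (S ∩ A) (M'.biUnion (fun e => A.filter (fun v => v ∈ e))) := by
    rw [Finset.disjoint_left]
    intro v hv hv'
    obtain ⟨e, he, hve⟩ := Finset.mem_biUnion.mp hv'
    exact hSM v (Finset.mem_inter.mp hv).1 e he (Finset.mem_filter.mp hve).2
  calc (S ∩ A).card + M'.card
      ≤ (S ∩ A).card + (M'.biUnion (fun e => A.filter (fun v => v ∈ e))).card := by omega
    _ = ((S ∩ A) ∪ M'.biUnion (fun e => A.filter (fun v => v ∈ e))).card :=
        (Finset.card_union_of_disjoint hd).symm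
    _ ≤ A.card := by
        apply Finset.card_le_card
        intro v hv
        rcases Finset.mem_union.mp hv with hv | hv
        · exact (Finset.mem_inter.mp hv).2
        · obtain ⟨e, _, hve⟩ := Finset.mem_biUnion.mp hv
          exact (Finset.mem_filter.mp hve).1

/-- The balanced biclique inequality: for an induced balanced biclique with parts `A`, `B` of
size `r`, every total matching uses at most `r` elements of the biclique. -/
theorem balanced_biclique_inequality {V : Type*} [DecidableEq V] (G : SimpleGraph V)
    (r : ℕ) (A B : Finset V) (hA : A.card = r) (hB : B.card = r) (hdisj : Disjoint A B)
    (hcomp : ∀ a ∈ A, ∀ b ∈ B, G.Adj a b)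
    (hAstable : ∀ a ∈ A, ∀ a' ∈ A, ¬ G.Adj a a')
    (hBstable : ∀ b ∈ B, ∀ b' ∈ B, ¬ G.Adj b b')
    (S : Finset V) (M : Finset (Sym2 V)) (h : IsTotalMatching G S M) :
    (S ∩ (A ∪ B)).card + (M.filter (fun e => ∃ a ∈ A, ∃ b ∈ B, e = s(a, b))).card ≤ r := by
  classical
  obtain ⟨hMedge, hSstable, hMM, hSM⟩ := h
  set M' := M.filter (fun e => ∃ a ∈ A, ∃ b ∈ B, e = s(a, b)) with hM'
  have hMM' : ∀ e ∈ M', ∀ f ∈ M', e ≠ f → ∀ v : V, ¬ (v ∈ e ∧ v ∈ f) :=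
    fun e he f hf => hMM e (Finset.mem_filter.mp he).1 f (Finset.mem_filter.mp hf).1
  have hSM' : ∀ v ∈ S, ∀ e ∈ M', v ∉ e :=
    fun v hv e he => hSM v hv e (Finset.mem_filter.mp he).1
  by_cases hSA : (S ∩ A).Nonempty
  · -- then S ∩ B = ∅
    obtain ⟨a, ha⟩ := hSA
    obtain ⟨haS, haA⟩ := Finset.mem_inter.mp ha
    have hSB : S ∩ B = ∅ := by
      by_contra hne
      obtain ⟨b, hb⟩ := Finset.nonempty_iff_ne_empty.mpr hne
      obtain ⟨hbS, hbB⟩ := Finset.mem_inter.mp hb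
      exact hSstable a haS b hbS (hcomp a haA b hbB)
    have : S ∩ (A ∪ B) = S ∩ A := by
      rw [Finset.inter_union_distrib_left, hSB, Finset.union_empty]
    rw [this, ← hA]
    apply aux_count A S M' _ hMM' hSM'
    intro e he
    obtain ⟨a, ha', b, hb', hee⟩ := (Finset.mem_filter.mp he).2
    exact ⟨a, ha', by rw [hee]; simp⟩
  · have : S ∩ (A ∪ B) = S ∩ B := by
      rw [Finset.inter_union_distrib_left, Finset.not_nonempty_iff_eq_empty.mp hSA,
        Finset.empty_union]
    rw [this, ← hB]
    apply aux_count B S M' _ hMM' hSM'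
    intro e he
    obtain ⟨a, ha', b, hb', hee⟩ := (Finset.mem_filter.mp he).2
    exact ⟨b, hb', by rw [hee]; simp⟩
end

section
/- Let G be a finite simple graph containing an induced (not necessarily balanced) biclique K_{r,s}. Then every total matching T of G satisfies |T ∩ (V(K_{r,s}) ∪ E(K_{r,s}))| ≤ max(r, s). -/
lemma biclique_aux {V : Type*} [DecidableEq V] (C S : Finset V) (M' : Finset (Sym2 V))
    (hS : S ⊆ C) (hM : ∀ e ∈ M', ∃ a, a ∈ C ∧ a ∈ e)
    (hMm : ∀ e ∈ M', ∀ f ∈ M', e ≠ f → ∀ v : V, ¬ (v ∈ e ∧ v ∈ f))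
    (hSM : ∀ v ∈ S, ∀ e ∈ M', v ∉ e) : S.card + M'.card ≤ C.card := by
  classical
  set fC : Sym2 V → V := fun e =>
    if h : ∃ a, a ∈ C ∧ a ∈ e then h.choose else (Quot.out e).1 with hf
  have key : ∀ e ∈ M', fC e ∈ C ∧ fC e ∈ e := by
    intro e he
    have h := hM e he
    simp only [hf, dif_pos h]
    exact h.choose_spec
  have hinj : Set.InjOn fC M' := by
    intro e he f hfm hef
    by_contra hne
    exact hMm e he f hfm hne (fC e) ⟨(key e he).2, hef ▸ (key f hfm).2⟩
  have hdisj : Disjoint S (M'.image fC) := by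
    rw [Finset.disjoint_left]
    intro v hv hvi
    obtain ⟨e, he, hev⟩ := Finset.mem_image.mp hvi
    exact hSM v hv e he (hev ▸ (key e he).2)
  have hsub : S ∪ M'.image fC ⊆ C := by
    intro v hv
    rcases Finset.mem_union.mp hv with hv | hv
    · exact hS hv
    · obtain ⟨e, he, hev⟩ := Finset.mem_image.mp hv
      exact hev ▸ (key e he).1
  calc S.card + M'.card = (S ∪ M'.image fC).card := by
        rw [Finset.card_union_of_disjoint hdisj, Finset.card_image_of_injOn hinj]
    _ ≤ C.card := Finset.card_le_card hsub


/-- For an induced biclique with parts `A`, `B` of sizes `r`, `s`, every total matching uses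
at most `max r s` elements of the biclique. -/
theorem biclique_inequality {V : Type*} [DecidableEq V] (G : SimpleGraph V)
    (r s : ℕ) (A B : Finset V) (hA : A.card = r) (hB : B.card = s) (hdisj : Disjoint A B)
    (hcomp : ∀ a ∈ A, ∀ b ∈ B, G.Adj a b)
    (hAstable : ∀ a ∈ A, ∀ a' ∈ A, ¬ G.Adj a a')
    (hBstable : ∀ b ∈ B, ∀ b' ∈ B, ¬ G.Adj b b')
    (S : Finset V) (M : Finset (Sym2 V)) (h : IsTotalMatching G S M) :
    (S ∩ (A ∪ B)).card + (M.filter (fun e => ∃ a ∈ A, ∃ b ∈ B, e = s(a, b))).card ≤ max r s := by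
  classical
  obtain ⟨hedge, hSS, hMM, hSMh⟩ := h
  set M' := M.filter (fun e => ∃ a ∈ A, ∃ b ∈ B, e = s(a, b)) with hM'
  have hM'sub : M' ⊆ M := Finset.filter_subset _ _
  have hMm : ∀ e ∈ M', ∀ f ∈ M', e ≠ f → ∀ v : V, ¬ (v ∈ e ∧ v ∈ f) :=
    fun e he f hfm => hMM e (hM'sub he) f (hM'sub hfm)
  have hSM : ∀ v ∈ S ∩ (A ∪ B), ∀ e ∈ M', v ∉ e := fun v hv e he =>
    hSMh v (Finset.mem_inter.mp hv).1 e (hM'sub he)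
  by_cases hSB : (S ∩ B).Nonempty
  · -- all vertices of the matching in the biclique lie in B
    obtain ⟨b0, hb0⟩ := hSB
    have hb0S := (Finset.mem_inter.mp hb0).1
    have hb0B := (Finset.mem_inter.mp hb0).2
    have hsubB : S ∩ (A ∪ B) ⊆ B := by
      intro v hv
      obtain ⟨hvS, hvAB⟩ := Finset.mem_inter.mp hv
      rcases Finset.mem_union.mp hvAB with hvA | hvB
      · exact absurd (hcomp v hvA b0 hb0B) (hSS v hvS b0 hb0S)
      · exact hvB
    have hM : ∀ e ∈ M', ∃ x, x ∈ B ∧ x ∈ e := by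
      intro e he
      obtain ⟨a, _, b, hbB, rfl⟩ := (Finset.mem_filter.mp he).2
      exact ⟨b, hbB, by simp⟩
    have := biclique_aux B (S ∩ (A ∪ B)) M' hsubB hM hMm hSM
    exact (hB ▸ this).trans (le_max_right r s)
  · have hSBe : S ∩ B = ∅ := Finset.not_nonempty_iff_eq_empty.mp hSB
    have hsubA : S ∩ (A ∪ B) ⊆ A := by
      intro v hv
      obtain ⟨hvS, hvAB⟩ := Finset.mem_inter.mp hv
      rcases Finset.mem_union.mp hvAB with hvA | hvB
      · exact hvA
      · exact absurd (Finset.mem_inter.mpr ⟨hvS, hvB⟩) (by simp [hSBe])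
    have hM : ∀ e ∈ M', ∃ x, x ∈ A ∧ x ∈ e := by
      intro e he
      obtain ⟨a, haA, b, _, rfl⟩ := (Finset.mem_filter.mp he).2
      exact ⟨a, haA, by simp⟩
    have := biclique_aux A (S ∩ (A ∪ B)) M' hsubA hM hMm hSM
    exact (hA ▸ this).trans (le_max_left r s)
end

section
/- Let K_{r,s} be a complete bipartite graph with parts R = {v_1, ..., v_r} and S, where s > r > 1. For any total matching T of K_{r,s}, the lifted inequality holds: (s − r + 1)·x_{v_1} + Σ_{i=2}^{r} x_{v_i} + Σ_{w ∈ S} x_w + Σ_{e ∈ E} y_e ≤ s, where (x, y) is the characteristic vector of T. -/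
open Finset

namespace IsTotalMatching

variable {V : Type*} {G : SimpleGraph V} {S : Finset V} {M : Finset (Sym2 V)}

theorem card_add_card_le_card_of_isVertexCover (h : IsTotalMatching G S M) {A : Finset V}
    (hA : G.IsVertexCover A) (hSA : S ⊆ A) : #S + #M ≤ #A := by
  classical
  obtain ⟨hMG, -, hMM, hSM⟩ := h
  have hMA : #M ≤ #(A \ S) := by
    refine card_le_card_of_forall_subsingleton (fun e v ↦ v ∈ e) (fun e he ↦ ?_) ?_
    · have hcover : ∃ v ∈ e, v ∈ A := by
        induction e using Sym2.ind with
        | _ u w => rcases hA (hMG _ he) with hu | hw <;> simp_all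
      obtain ⟨v, hve, hvA⟩ := hcover
      exact ⟨v, mem_sdiff.2 ⟨hvA, fun hvS ↦ hSM v hvS e he hve⟩, hve⟩
    · intro v _ e ⟨he, hve⟩ f ⟨hf, hvf⟩
      by_contra hef
      exact hMM e he f hf hef v ⟨hve, hvf⟩
  have := card_sdiff_add_card_eq_card hSA
  omega

end IsTotalMatching

namespace SimpleGraph

variable {V W : Type*}

theorem isVertexCover_completeBipartiteGraph_range_inl :
    (completeBipartiteGraph V W).IsVertexCover (Set.range Sum.inl) := by
  rintro (v | v) (w | w) hvw <;> simp_all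

theorem isVertexCover_completeBipartiteGraph_range_inr :
    (completeBipartiteGraph V W).IsVertexCover (Set.range Sum.inr) := by
  rintro (v | v) (w | w) hvw <;> simp_all

theorem forall_isLeft_or_forall_isRight_of_completeBipartiteGraph {S : Set (V ⊕ W)}
    (hS : ∀ u ∈ S, ∀ v ∈ S, ¬ (completeBipartiteGraph V W).Adj u v) :
    (∀ v ∈ S, v.isLeft) ∨ ∀ v ∈ S, v.isRight := by
  by_contra! ⟨⟨u, huS, hu⟩, ⟨v, hvS, hv⟩⟩
  exact hS u huS v hvS (by simp_all)

end SimpleGraph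

namespace IsTotalMatching

variable {V W : Type*} {S : Finset (V ⊕ W)} {M : Finset (Sym2 (V ⊕ W))}

theorem card_add_card_le_card_left [Fintype V]
    (h : IsTotalMatching (completeBipartiteGraph V W) S M) (hS : ∀ v ∈ S, v.isLeft) :
    #S + #M ≤ Fintype.card V := by
  classical
  have hSA : S ⊆ univ.map .inl := fun v hv ↦ by
    obtain ⟨i, rfl⟩ := Sum.isLeft_iff.1 (hS v hv)
    simp
  simpa using h.card_add_card_le_card_of_isVertexCover
    (by simpa using SimpleGraph.isVertexCover_completeBipartiteGraph_range_inl) hSA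

theorem card_add_card_le_card_right [Fintype W]
    (h : IsTotalMatching (completeBipartiteGraph V W) S M) (hS : ∀ v ∈ S, v.isRight) :
    #S + #M ≤ Fintype.card W := by
  classical
  have hSA : S ⊆ univ.map .inr := fun v hv ↦ by
    obtain ⟨i, rfl⟩ := Sum.isRight_iff.1 (hS v hv)
    simp
  simpa using h.card_add_card_le_card_of_isVertexCover
    (by simpa using SimpleGraph.isVertexCover_completeBipartiteGraph_range_inr) hSA

end IsTotalMatching

theorem lifted_biclique_inequality_general (r s : ℕ) (hrs : r < s) (v₁ : Fin r)
    (S : Finset (Fin r ⊕ Fin s)) (M : Finset (Sym2 (Fin r ⊕ Fin s)))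
    (h : IsTotalMatching (completeBipartiteGraph (Fin r) (Fin s)) S M) :
    (s - r + 1) * (if Sum.inl v₁ ∈ S then 1 else 0) + (S.erase (Sum.inl v₁)).card + M.card
      ≤ s := by
  rcases SimpleGraph.forall_isLeft_or_forall_isRight_of_completeBipartiteGraph h.2.1
    with hleft | hright
  · have hcard := h.card_add_card_le_card_left hleft
    rw [Fintype.card_fin] at hcard
    by_cases hv : Sum.inl v₁ ∈ S
    · have := card_erase_add_one hv
      rw [if_pos hv]
      omega
    · rw [if_neg hv, erase_eq_of_notMem hv]
      omega
  · have hv : Sum.inl v₁ ∉ S := fun hv ↦ by simpa using hright _ hv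
    have hcard := h.card_add_card_le_card_right hright
    rw [Fintype.card_fin] at hcard
    rw [if_neg hv, erase_eq_of_notMem hv]
    omega

/-- The non-balanced lifted biclique inequality
`(s-r+1)·x_{v₁} + Σ_{i≥2} x_{v_i} + Σ_{w∈S} x_w + Σ_e y_e ≤ s` is valid for every total
matching of `K_{r,s}` (`s > r > 1`). -/
theorem lifted_biclique_inequality (r s : ℕ) (hr : 1 < r) (hrs : r < s) (v₁ : Fin r)
    (S : Finset (Fin r ⊕ Fin s)) (M : Finset (Sym2 (Fin r ⊕ Fin s)))
    (h : IsTotalMatching (completeBipartiteGraph (Fin r) (Fin s)) S M) :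
    (s - r + 1) * (if Sum.inl v₁ ∈ S then 1 else 0) + (S.erase (Sum.inl v₁)).card + M.card
      ≤ s :=
  lifted_biclique_inequality_general r s hrs v₁ S M h
end

section
/- In the complete bipartite graph K_{r,s} with parts R (|R| = r) and S (|S| = s), s > r > 1, fix v_1 ∈ R. The maximum of Σ_{w ∈ S} x_w + Σ_{e ∈ E} y_e over characteristic vectors of total matchings T containing v_1 and containing no other vertex of R equals r − 1. -/
/-!
Every edge of `K_{r,s}` has an endpoint in `R`, and the edges of a total matching are
disjoint and avoid its vertices, so assigning to each edge its endpoint in `R` injects the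
edges of the matching into `R \ {v₁}`. Vertices of `S` are all adjacent to `v₁`, so none
can be taken. Conversely, since `r < s`, the edges `{u, u'}` for `u ∈ R \ {v₁}`, with `u'`
the copy of `u` in `S`, together with `v₁` form a total matching of size `1 + (r - 1)`.
-/

open Finset

namespace IsTotalMatching

variable {V : Type*} {G : SimpleGraph V} {S : Finset V} {M : Finset (Sym2 V)}

theorem card_edges_le_card_sdiff [DecidableEq V] (h : IsTotalMatching G S M) (T : Finset V)
    (hT : ∀ e ∈ M, ∃ v ∈ T, v ∈ e) : #M ≤ #(T \ S) := by
  refine card_le_card_of_forall_subsingleton (fun e v => v ∈ e) (fun e he => ?_) ?_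
  · obtain ⟨v, hvT, hve⟩ := hT e he
    exact ⟨v, mem_sdiff.2 ⟨hvT, fun hvS => h.2.2.2 v hvS e he hve⟩, hve⟩
  · rintro v - e ⟨he, hve⟩ f ⟨hf, hvf⟩
    by_contra hef
    exact h.2.2.1 e he f hf hef v ⟨hve, hvf⟩

end IsTotalMatching

section CompleteBipartite

variable {V W : Type*}

theorem completeBipartiteGraph_exists_inl_mem {e : Sym2 (V ⊕ W)}
    (he : e ∈ (completeBipartiteGraph V W).edgeSet) : ∃ a : V, Sum.inl a ∈ e := by
  induction e using Sym2.ind with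
  | _ x y =>
    rw [SimpleGraph.mem_edgeSet] at he
    rcases x with a | b <;> rcases y with a' | b' <;> simp_all

theorem IsTotalMatching.filter_isRight_eq_empty {S : Finset (V ⊕ W)} {M : Finset (Sym2 (V ⊕ W))}
    (h : IsTotalMatching (completeBipartiteGraph V W) S M) {v : V} (hv : Sum.inl v ∈ S) :
    S.filter (fun a => a.isRight) = ∅ := by
  refine filter_eq_empty_iff.2 ?_
  rintro (a | b) hmem
  · simp
  · exact fun _ => h.2.1 _ hv _ hmem (by simp)

theorem IsTotalMatching.card_edges_le_card_sub_one [Fintype V] [DecidableEq V] [DecidableEq W]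
    {S : Finset (V ⊕ W)} {M : Finset (Sym2 (V ⊕ W))}
    (h : IsTotalMatching (completeBipartiteGraph V W) S M) {v : V} (hv : Sum.inl v ∈ S) :
    #M ≤ Fintype.card V - 1 := by
  have hleft : ∀ e ∈ M, ∃ u ∈ univ.map .inl, u ∈ e := fun e he => by
    obtain ⟨a, ha⟩ := completeBipartiteGraph_exists_inl_mem (h.1 e he)
    exact ⟨_, mem_map_of_mem _ (mem_univ a), ha⟩
  calc #M ≤ #(univ.map .inl \ S) := h.card_edges_le_card_sdiff _ hleft
    _ ≤ #((univ.map .inl).erase (Sum.inl v)) :=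
        card_le_card fun u hu => mem_erase.2
          ⟨fun huv => (mem_sdiff.1 hu).2 (huv ▸ hv), (mem_sdiff.1 hu).1⟩
    _ = Fintype.card V - 1 := by simp

section GraphEdges

variable [DecidableEq V] [DecidableEq W]

def graphEdges (f : V → W) (A : Finset V) : Finset (Sym2 (V ⊕ W)) :=
  A.image fun a => s(Sum.inl a, Sum.inr (f a))

theorem card_graphEdges (f : V → W) (A : Finset V) : #(graphEdges f A) = #A := by
  refine card_image_of_injective _ fun a b hab => ?_
  simp only [Sym2.eq_iff, Sum.inl.injEq, reduceCtorEq, false_and, or_false] at hab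
  exact hab.1

theorem isTotalMatching_singleton_graphEdges (f : V ↪ W) {A : Finset V} {v : V} (hv : v ∉ A) :
    IsTotalMatching (completeBipartiteGraph V W) {Sum.inl v} (graphEdges f A) := by
  simp only [graphEdges]
  refine ⟨?_, ?_, ?_, ?_⟩
  · simp
  · simp
  · simp only [mem_image]
    rintro _ ⟨a, -, rfl⟩ _ ⟨b, -, rfl⟩ hab u ⟨hua, hub⟩
    rcases u with u | u <;> simp_all
  · simp only [mem_singleton, mem_image]
    rintro _ rfl _ ⟨a, ha, rfl⟩
    simp only [Sym2.mem_iff, Sum.inl.injEq, reduceCtorEq, or_false]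
    rintro rfl
    exact hv ha

end GraphEdges

end CompleteBipartite

theorem lifting_coefficient_max_general (r s : ℕ) (hrs : r < s) (v₁ : Fin r) :
    IsGreatest {n : ℕ | ∃ S M, IsTotalMatching (completeBipartiteGraph (Fin r) (Fin s)) S M ∧
      Sum.inl v₁ ∈ S ∧ (∀ u : Fin r, Sum.inl u ∈ S → u = v₁) ∧
      n = (S.filter (fun a => a.isRight)).card + M.card} (r - 1) := by
  classical
  constructor
  · have hT := isTotalMatching_singleton_graphEdges (Fin.castLEEmb hrs.le)
      (notMem_erase v₁ univ)
    refine ⟨_, _, hT, mem_singleton_self _, by simp, ?_⟩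
    rw [hT.filter_isRight_eq_empty (mem_singleton_self _), card_graphEdges]
    simp
  · rintro n ⟨S, M, hT, hv₁, -, rfl⟩
    rw [hT.filter_isRight_eq_empty hv₁, card_empty, zero_add]
    simpa using hT.card_edges_le_card_sub_one hv₁

/-- In `K_{r,s}` (`s > r > 1`) with a fixed `v₁ ∈ R`, the maximum of
`Σ_{w ∈ S} x_w + Σ_e y_e` over total matchings containing `v₁` and no other vertex of `R`
equals `r - 1`. -/
theorem lifting_coefficient_max (r s : ℕ) (hr : 1 < r) (hrs : r < s) (v₁ : Fin r) :
    IsGreatest {n : ℕ | ∃ S M, IsTotalMatching (completeBipartiteGraph (Fin r) (Fin s)) S M ∧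
      Sum.inl v₁ ∈ S ∧ (∀ u : Fin r, Sum.inl u ∈ S → u = v₁) ∧
      n = (S.filter (fun a => a.isRight)).card + M.card} (r - 1) :=
  lifting_coefficient_max_general r s hrs v₁
end

section
/- For every tree G, the total graph T(G) contains no induced cycle of length at least 4 (i.e., T(G) is chordal). -/
/-!
The total graph `T(G)` is the square of the subdivision of `G`, which is again a forest. Cutting
the subdivision at one incidence `x — s(x, y)` splits the elements of `G` into two sides, and every
edge of `T(G)` crosses such a cut. The edges of `T(G)` across the cut are `xy` and the pairs
`{a, s(x, y)}` with `a` equal to `x` or to an edge at `x`, so any two of them span a triangle.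
An induced cycle crossing the cut once must cross it a second time along another edge, and hence
would contain a triangle, which is impossible for a cycle of length at least `4`.
-/

/-- The total graph T(G): vertices are the vertices and edges of `G`, with adjacency given by
adjacency/incidence in `G`. -/
def totalGraph {V : Type*} (G : SimpleGraph V) : SimpleGraph (V ⊕ G.edgeSet) where
  Adj a b :=
    match a, b with
    | Sum.inl u, Sum.inl v => G.Adj u v
    | Sum.inl u, Sum.inr e => u ∈ (e : Sym2 V)
    | Sum.inr e, Sum.inl u => u ∈ (e : Sym2 V)
    | Sum.inr e, Sum.inr f => e ≠ f ∧ ∃ v, v ∈ (e : Sym2 V) ∧ v ∈ (f : Sym2 V)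
  symm := by
    constructor
    rintro (u | e) (v | f) h
    · exact h.symm
    · exact h
    · exact h
    · exact ⟨h.1.symm, h.2.imp fun v hv => ⟨hv.2, hv.1⟩⟩
  loopless := by
    constructor
    rintro (u | e) h
    · exact G.irrefl h
    · exact h.1 rfl

open SimpleGraph Sum

section CycleGraph

open Fin.NatCast Fin.CommRing

theorem Fin.exists_ne_not_iff_add_one {n : ℕ} [NeZero n] {s : Fin n → Prop} {i : Fin n}
    (hi : ¬(s i ↔ s (i + 1))) : ∃ j ≠ i, ¬(s j ↔ s (j + 1)) := by
  by_contra! hcon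
  have around : ∀ k : ℕ, k < n → (s (i + 1) ↔ s (i + 1 + (k : Fin n))) := by
    intro k
    induction k with
    | zero => simp
    | succ k ih =>
      intro hk
      have hne : i + 1 + (k : Fin n) ≠ i := by
        rw [add_assoc, ne_eq, add_eq_left, ← Nat.cast_one, ← Nat.cast_add, Fin.natCast_eq_zero]
        exact Nat.not_dvd_of_pos_of_lt (by omega) (by omega)
      rw [Nat.cast_succ, ← add_assoc]
      exact (ih (by omega)).trans (hcon _ hne)
  have := around (n - 1) (by have := NeZero.pos n; omega)
  rw [add_assoc, ← Nat.cast_one, ← Nat.cast_add, Nat.add_sub_cancel' (NeZero.pos n),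
    Fin.natCast_self, add_zero] at this
  exact hi this.symm

theorem SimpleGraph.cycleGraph_adj_add_one {n : ℕ} (i : Fin (n + 2)) :
    (cycleGraph (n + 2)).Adj i (i + 1) :=
  cycleGraph_adj.mpr (Or.inr (add_sub_cancel_left i 1))

theorem SimpleGraph.cycleGraph_cliqueFree_three {n : ℕ} (hn : 4 ≤ n) :
    (cycleGraph n).CliqueFree 3 := by
  obtain ⟨m, rfl⟩ : ∃ m, n = m + 4 := ⟨n - 4, by omega⟩
  intro t ht
  obtain ⟨i, j, k, hij, hik, hjk, -⟩ := is3Clique_iff.mp ht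
  have h1 : (1 : Fin (m + 4)) ≠ 0 := by simp
  have h3 : (3 : Fin (m + 4)) ≠ 0 := by simp [Fin.ext_iff, Nat.mod_eq_of_lt]
  rw [cycleGraph_adj] at hij hik hjk
  -- `i - j`, `j - k`, `k - i` are `±1` and sum to `0`, forcing `1 = 0` or `3 = 0`
  grind

end CycleGraph

theorem Sym2.exists_eq_mk_mem_notMem {α : Type*} {S : Set α} {a b : α}
    (h : ¬(a ∈ S ↔ b ∈ S)) : ∃ p q, s(p, q) = s(a, b) ∧ p ∈ S ∧ q ∉ S := by
  by_cases ha : a ∈ S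
  · exact ⟨a, b, rfl, ha, fun hb => h (iff_of_true ha hb)⟩
  · exact ⟨b, a, Sym2.eq_swap, by tauto, ha⟩

namespace SimpleGraph

variable {W : Type*}

def CrossingsSpanTriangles (H : SimpleGraph W) (S : Set W) : Prop :=
  ∀ ⦃a b c d : W⦄, H.Adj a b → H.Adj c d → a ∈ S → b ∉ S → c ∈ S → d ∉ S →
    s(a, b) ≠ s(c, d) →
    ∃ u v w, ({u, v, w} : Set W) ⊆ {a, b, c, d} ∧ H.Adj u v ∧ H.Adj u w ∧ H.Adj v w

open Fin.CommRing in
theorem CrossingsSpanTriangles.mem_iff_of_adj {H : SimpleGraph W} {S : Set W}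
    (hS : H.CrossingsSpanTriangles S) {n : ℕ} (hn : 4 ≤ n) (f : cycleGraph n ↪g H)
    {i j : Fin n} (hij : (cycleGraph n).Adj i j) : f i ∈ S ↔ f j ∈ S := by
  obtain ⟨m, rfl⟩ : ∃ m, n = m + 2 := ⟨n - 2, by omega⟩
  wlog hj : j = i + 1 generalizing i j
  · have hi : i = j + 1 := by
      rcases cycleGraph_adj.mp hij with h | h
      · exact sub_eq_iff_eq_add'.mp h
      · exact absurd (sub_eq_iff_eq_add'.mp h) hj
    exact (this hij.symm hi).symm
  subst hj
  by_contra hcross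
  obtain ⟨j, hji, hj⟩ := Fin.exists_ne_not_iff_add_one (s := (f · ∈ S)) hcross
  obtain ⟨p, q, hpq, hp, hq⟩ := Sym2.exists_eq_mk_mem_notMem (S := f ⁻¹' S) hcross
  obtain ⟨p', q', hpq', hp', hq'⟩ := Sym2.exists_eq_mk_mem_notMem (S := f ⁻¹' S) hj
  have adj : ∀ {p q k : Fin (m + 2)}, s(p, q) = s(k, k + 1) → H.Adj (f p) (f q) := by
    intro p q k h
    rw [f.map_adj_iff, ← mem_edgeSet, h]
    exact cycleGraph_adj_add_one k
  have hne : s(f p, f q) ≠ s(f p', f q') := by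
    rw [← Sym2.map_mk, ← Sym2.map_mk, (Sym2.map.injective f.injective).ne_iff, hpq, hpq', Ne,
      Sym2.eq_iff]
    have h2 : (2 : Fin (m + 2)) ≠ 0 := by
      simp [Fin.ext_iff, Nat.mod_eq_of_lt (by omega : 2 < m + 2)]
    rintro (⟨h, -⟩ | ⟨h, h'⟩)
    · exact hji h.symm
    · exact h2 (by linear_combination h' - h)
  obtain ⟨u, v, w, huvw, huv, huw, hvw⟩ := hS (adj hpq) (adj hpq') hp hq hp' hq' hne
  have hrange : ({u, v, w} : Set W) ⊆ Set.range f :=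
    huvw.trans (by simp [Set.insert_subset_iff])
  obtain ⟨⟨a, rfl⟩, ⟨b, rfl⟩, ⟨c, rfl⟩⟩ : u ∈ Set.range f ∧ v ∈ Set.range f ∧ w ∈ Set.range f :=
    ⟨hrange (by simp), hrange (by simp), hrange (by simp)⟩
  exact cycleGraph_cliqueFree_three hn _
    (is3Clique_triple_iff.mpr ⟨f.map_adj_iff.mp huv, f.map_adj_iff.mp huw, f.map_adj_iff.mp hvw⟩)

end SimpleGraph

namespace totalGraph

variable {V : Type*} {G : SimpleGraph V}

def cutSide (G : SimpleGraph V) (x y : V) : Set (V ⊕ G.edgeSet)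
  | inl u => (G.deleteEdges {s(x, y)}).Reachable x u
  | inr e => (e : Sym2 V) ≠ s(x, y) ∧ ∃ w ∈ (e : Sym2 V), (G.deleteEdges {s(x, y)}).Reachable x w

def closedStar (G : SimpleGraph V) (x : V) : Set (V ⊕ G.edgeSet)
  | inl u => u = x
  | inr e => x ∈ (e : Sym2 V)

theorem isClique_closedStar (x : V) : (totalGraph G).IsClique (closedStar G x) := by
  rintro (u | e) hu (v | f) hv hne
  · exact absurd (congrArg inl ((hu : u = x).trans (hv : v = x).symm)) hne
  · exact (hu : u = x) ▸ hv
  · exact (hv : v = x) ▸ hu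
  · exact ⟨fun h => hne (congrArg inr h), x, hu, hv⟩

theorem inl_mem_cutSide_self (x y : V) : inl x ∈ cutSide G x y := Reachable.refl x

theorem inl_notMem_cutSide (hG : G.IsAcyclic) {x y : V} (hxy : G.Adj x y) :
    inl y ∉ cutSide G x y :=
  isBridge_iff.mp (isAcyclic_iff_forall_adj_isBridge.mp hG hxy)

theorem inr_mem_cutSide {x y : V} {e : G.edgeSet} (hx : x ∈ (e : Sym2 V))
    (he : (e : Sym2 V) ≠ s(x, y)) : inr e ∈ cutSide G x y :=
  ⟨he, x, hx, Reachable.refl x⟩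

theorem inr_notMem_cutSide {x y : V} {e : G.edgeSet} (he : (e : Sym2 V) = s(x, y)) :
    inr e ∉ cutSide G x y :=
  fun h => h.1 he

theorem eq_of_mem_of_not_iff_mem_cutSide (hG : G.IsAcyclic) {x y u : V} (hxy : G.Adj x y)
    {e : G.edgeSet} (hu : u ∈ (e : Sym2 V)) (h : ¬(inl u ∈ cutSide G x y ↔ inr e ∈ cutSide G x y)) :
    u = x ∧ (e : Sym2 V) = s(x, y) := by
  obtain ⟨v, hv⟩ := Sym2.mem_iff_exists.mp hu
  by_contra hcut
  by_cases he : (e : Sym2 V) = s(x, y)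
  · rcases Sym2.eq_iff.mp (hv.symm.trans he) with ⟨hux, -⟩ | ⟨rfl, -⟩
    · exact hcut ⟨hux, he⟩
    · exact h (iff_of_false (inl_notMem_cutSide hG hxy) (inr_notMem_cutSide he))
  · have huv : (G.deleteEdges {s(x, y)}).Adj u v := by
      rw [deleteEdges_adj, ← mem_edgeSet, ← hv, Set.mem_singleton_iff]
      exact ⟨e.2, he⟩
    refine h ⟨fun hr => ⟨he, u, hu, hr⟩, ?_⟩
    rintro ⟨-, w, hw, hr⟩
    rcases Sym2.mem_iff.mp (hv ▸ hw) with rfl | rfl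
    · exact hr
    · exact hr.trans huv.symm.reachable

theorem eq_of_adj_of_mem_cutSide_of_notMem (hG : G.IsAcyclic) {x y : V} (hxy : G.Adj x y)
    {a b : V ⊕ G.edgeSet} (hab : (totalGraph G).Adj a b) (ha : a ∈ cutSide G x y)
    (hb : b ∉ cutSide G x y) :
    (a = inl x ∧ b = inl y) ∨ (b = inr ⟨s(x, y), hxy⟩ ∧ a ∈ closedStar G x) := by
  have hsep : ¬(a ∈ cutSide G x y ↔ b ∈ cutSide G x y) := fun h => hb (h.mp ha)
  have edge_eq {e : G.edgeSet} (he : (e : Sym2 V) = s(x, y)) :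
      (inr e : V ⊕ G.edgeSet) = inr ⟨s(x, y), hxy⟩ :=
    congrArg inr (Subtype.ext he)
  rcases a with u | h <;> rcases b with v | g
  · let e : G.edgeSet := ⟨s(u, v), hab⟩
    have hsep' : ¬(inl u ∈ cutSide G x y ↔ inr e ∈ cutSide G x y) ∨
        ¬(inl v ∈ cutSide G x y ↔ inr e ∈ cutSide G x y) := by tauto
    rcases hsep' with h | h
    · obtain ⟨rfl, he⟩ := eq_of_mem_of_not_iff_mem_cutSide hG hxy (Sym2.mem_mk_left u v) h
      exact Or.inl ⟨rfl, congrArg inl (Sym2.congr_right.mp he)⟩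
    · obtain ⟨rfl, he⟩ := eq_of_mem_of_not_iff_mem_cutSide hG hxy (Sym2.mem_mk_right u v) h
      rcases Sym2.eq_iff.mp he with ⟨rfl, -⟩ | ⟨rfl, -⟩
      · exact absurd hab (G.irrefl)
      · exact absurd ha (inl_notMem_cutSide hG hxy)
  · obtain ⟨rfl, he⟩ := eq_of_mem_of_not_iff_mem_cutSide hG hxy hab hsep
    exact Or.inr ⟨edge_eq he, rfl⟩
  · obtain ⟨-, he⟩ := eq_of_mem_of_not_iff_mem_cutSide hG hxy hab (fun h => hsep h.symm)
    exact absurd ha (inr_notMem_cutSide he)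
  · obtain ⟨-, w, hwh, hwg⟩ := hab
    have hsep' : ¬(inl w ∈ cutSide G x y ↔ inr h ∈ cutSide G x y) ∨
        ¬(inl w ∈ cutSide G x y ↔ inr g ∈ cutSide G x y) := by tauto
    rcases hsep' with hs | hs
    · exact absurd ha (inr_notMem_cutSide (eq_of_mem_of_not_iff_mem_cutSide hG hxy hwh hs).2)
    · obtain ⟨rfl, he⟩ := eq_of_mem_of_not_iff_mem_cutSide hG hxy hwg hs
      exact Or.inr ⟨edge_eq he, hwh⟩

theorem crossingsSpanTriangles_cutSide (hG : G.IsAcyclic) {x y : V} (hxy : G.Adj x y) :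
    (totalGraph G).CrossingsSpanTriangles (cutSide G x y) := by
  intro a b c d hab hcd ha hb hc hd hne
  have hxy' : (totalGraph G).Adj (inl x) (inl y) := hxy
  have hxe : (totalGraph G).Adj (inl x) (inr ⟨s(x, y), hxy⟩) := Sym2.mem_mk_left x y
  have hye : (totalGraph G).Adj (inl y) (inr ⟨s(x, y), hxy⟩) := Sym2.mem_mk_right x y
  rcases eq_of_adj_of_mem_cutSide_of_notMem hG hxy hab ha hb with ⟨rfl, rfl⟩ | ⟨rfl, ha'⟩ <;>
    rcases eq_of_adj_of_mem_cutSide_of_notMem hG hxy hcd hc hd with ⟨rfl, rfl⟩ | ⟨rfl, hc'⟩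
  · exact absurd rfl hne
  · exact ⟨_, _, _, by simp [Set.insert_subset_iff], hxy', hxe, hye⟩
  · exact ⟨_, _, _, by simp [Set.insert_subset_iff], hxy', hxe, hye⟩
  · have hac : a ≠ c := by
      rintro rfl
      exact hne rfl
    exact ⟨a, c, _, by simp, isClique_closedStar x ha' hc' hac, hab, hcd⟩

theorem exists_adj_not_iff_mem_cutSide (hG : G.IsAcyclic) {a b : V ⊕ G.edgeSet}
    (hab : (totalGraph G).Adj a b) :
    ∃ x y, G.Adj x y ∧ ¬(a ∈ cutSide G x y ↔ b ∈ cutSide G x y) := by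
  have separates {a : V ⊕ G.edgeSet} {u : V} {e : G.edgeSet} (hu : u ∈ (e : Sym2 V))
      (ha : a ∈ closedStar G u) (hae : a ≠ inr e) :
      ∃ x y, G.Adj x y ∧ ¬(a ∈ cutSide G x y ↔ inr e ∈ cutSide G x y) := by
    obtain ⟨v, hv⟩ := Sym2.mem_iff_exists.mp hu
    refine ⟨u, v, by simpa [hv] using e.2, fun h => inr_notMem_cutSide hv (h.mp ?_)⟩
    rcases a with w | f
    · obtain rfl : w = u := ha
      exact inl_mem_cutSide_self w v
    · exact inr_mem_cutSide ha (hv ▸ fun hf => hae (congrArg inr (Subtype.ext hf)))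
  rcases a with u | h <;> rcases b with v | g
  · exact ⟨u, v, hab, fun h => inl_notMem_cutSide hG hab (h.mp (inl_mem_cutSide_self u v))⟩
  · exact separates hab rfl inl_ne_inr
  · obtain ⟨x, y, hxy, hsep⟩ := separates hab rfl inl_ne_inr
    exact ⟨x, y, hxy, fun h => hsep h.symm⟩
  · obtain ⟨hhg, w, hwh, hwg⟩ := hab
    exact separates hwg hwh (fun h => hhg (inr_injective h))

end totalGraph

open totalGraph in
theorem totalGraph_of_tree_chordal_general {V : Type*} (G : SimpleGraph V) (hacyc : G.IsAcyclic) :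
    ∀ n : ℕ, 4 ≤ n → IsEmpty (SimpleGraph.cycleGraph n ↪g totalGraph G) := by
  intro n hn
  obtain ⟨m, rfl⟩ : ∃ m, n = m + 2 := ⟨n - 2, by omega⟩
  refine ⟨fun f => ?_⟩
  have h01 := cycleGraph_adj_add_one (0 : Fin (m + 2))
  obtain ⟨x, y, hxy, hsep⟩ := exists_adj_not_iff_mem_cutSide hacyc (f.map_adj_iff.mpr h01)
  exact hsep ((crossingsSpanTriangles_cutSide hacyc hxy).mem_iff_of_adj hn f h01)

/-- The total graph of a finite tree is chordal: it has no induced cycle of length ≥ 4. -/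
theorem totalGraph_of_tree_chordal {V : Type*} [Fintype V] (G : SimpleGraph V)
    (hconn : G.Connected) (hacyc : G.IsAcyclic) :
    ∀ n : ℕ, 4 ≤ n → IsEmpty (SimpleGraph.cycleGraph n ↪g totalGraph G) :=
  totalGraph_of_tree_chordal_general G hacyc
end

section
/- Let K_{r,s} (s > r ≥ 1) have parts R and S. If β_e > 1 for some edge e, then the inequality Σ_{v ∈ V} x_v + Σ_{f ≠ e} y_f + β_e y_e ≤ s is violated by some total matching, so no edge coefficient in the non-balanced lifted biclique inequality can exceed 1. -/
/-- In `K_{r,s}` (`s > r ≥ 1`), if an edge coefficient `β > 1`, then the inequality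
`Σ_v x_v + Σ_{f ≠ e} y_f + β·y_e ≤ s` is violated by some total matching containing `e`. -/
theorem no_edge_lifting (r s : ℕ) (hr : 1 ≤ r) (hrs : r < s) (β : ℝ) (hβ : 1 < β)
    (e : Sym2 (Fin r ⊕ Fin s))
    (he : e ∈ (completeBipartiteGraph (Fin r) (Fin s)).edgeSet) :
    ∃ S M, IsTotalMatching (completeBipartiteGraph (Fin r) (Fin s)) S M ∧ e ∈ M ∧
      (s : ℝ) < (S.card : ℝ) + ((M.erase e).card : ℝ) + β := by
  -- extract the endpoints of e
  obtain ⟨a, b, hab⟩ : ∃ (a : Fin r) (b : Fin s), e = s(Sum.inl a, Sum.inr b) := by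
    induction e using Sym2.ind with
    | _ u v =>
      rw [SimpleGraph.mem_edgeSet] at he
      rcases he with ⟨hu, hv⟩ | ⟨hu, hv⟩
      · obtain ⟨a, rfl⟩ := Sum.isLeft_iff.mp hu
        obtain ⟨b, rfl⟩ := Sum.isRight_iff.mp hv
        exact ⟨a, b, rfl⟩
      · obtain ⟨b, rfl⟩ := Sum.isRight_iff.mp hu
        obtain ⟨a, rfl⟩ := Sum.isLeft_iff.mp hv
        exact ⟨a, b, Sym2.eq_swap⟩
  refine ⟨(Finset.univ.image Sum.inr).erase (Sum.inr b), {e}, ?_, Finset.mem_singleton_self e, ?_⟩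
  · refine ⟨?_, ?_, ?_, ?_⟩
    · intro f hf; rw [Finset.mem_singleton] at hf; subst hf; exact he
    · intro u hu v hv hadj
      rw [Finset.mem_erase, Finset.mem_image] at hu hv
      obtain ⟨_, j, _, rfl⟩ := hu
      obtain ⟨_, k, _, rfl⟩ := hv
      simp at hadj
    · intro f hf g hg hfg v
      rw [Finset.mem_singleton] at hf hg
      exact absurd (hf.trans hg.symm) hfg
    · intro v hv f hf
      rw [Finset.mem_singleton] at hf; subst hf
      rw [Finset.mem_erase, Finset.mem_image] at hv
      obtain ⟨hne, j, _, rfl⟩ := hv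
      subst hab
      rw [Sym2.mem_iff]
      rintro (h | h)
      · exact Sum.inl_ne_inr h.symm
      · exact hne h
  · have h1 : (Finset.univ.image (Sum.inr : Fin s → Fin r ⊕ Fin s)).card = s := by
      rw [Finset.card_image_of_injective _ Sum.inr_injective, Finset.card_univ, Fintype.card_fin]
    have h2 : ((Finset.univ.image (Sum.inr : Fin s → Fin r ⊕ Fin s)).erase (Sum.inr b)).card
        = s - 1 := by
      rw [Finset.card_erase_of_mem (Finset.mem_image_of_mem _ (Finset.mem_univ b)), h1]
    have h3 : (({e} : Finset (Sym2 (Fin r ⊕ Fin s))).erase e).card = 0 := by simp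
    rw [h2, h3]
    have hs : 1 ≤ s := le_trans hr hrs.le
    have : ((s : ℝ) - 1) ≤ ((s - 1 : ℕ) : ℝ) := by
      rw [Nat.cast_sub hs]; simp
    linarith
end
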